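/- arXiv:1802.05906 — 2 statements merged into one kernel-verified Lean document; each statement's English description precedes it below -/
import Mathlib

section
/- Let 1 ≤ k ≤ n and let c be a character with c ≠ $. Suppose there exists a position p > k with BWT[p] = c, and let p be the smallest such position. Then SA[p] > 1, and the suffix T[SA[p]−1..n] is the lexicographically smallest suffix of T that is strictly greater than the string c · T[SA[k]..n] (the concatenation of the character c with the suffix T[SA[k]..n]). -/
/-!
Write `S i` for the `i`-th smallest suffix `T[SA[i]..n]`. Since `BWT[p] = c`, the suffix
`T[SA[p]-1..n]` is `c · S p`, which exceeds `c · S k` because `k < p`. If some suffix `X` lay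
strictly between `c · S k` and `c · S p`, it would have the form `c · S m` (it cannot be the
final suffix `$`), and then `S k < S m < S p` forces `k < m < p` with `BWT[m] = c`, contradicting
the minimality of `p`.
-/

variable {α : Type*} [LinearOrder α]

/-- The suffix `T[p..n]` of a 1-indexed string `T[1..n]`, as a list. -/
def sfx (T : ℕ → α) (n p : ℕ) : List α :=
  (List.range (n + 1 - p)).map (fun d => T (p + d))

/-- The Burrows–Wheeler transform determined by the text `T`, its suffix array `SA`,
and the end-of-string character `dollar`:  `BWT[i] = T[SA[i]-1]` if `SA[i] > 1`,
and `BWT[i] = $` if `SA[i] = 1`. -/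
def bwt (T : ℕ → α) (SA : ℕ → ℕ) (dollar : α) (i : ℕ) : α :=
  if SA i = 1 then dollar else T (SA i - 1)

lemma List.eq_and_lt_and_lt_of_cons_lt_cons_of_cons_lt_cons {c x : α} {u v w : List α}
    (h₁ : c :: u < x :: v) (h₂ : x :: v < c :: w) : x = c ∧ u < v ∧ v < w := by
  rcases List.cons_lt_cons_iff.mp h₁ with hcx | ⟨rfl, huv⟩
  · rcases List.cons_lt_cons_iff.mp h₂ with hxc | ⟨rfl, _⟩
    · exact absurd hcx (lt_asymm hxc)
    · exact absurd hcx (lt_irrefl _)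
  · rcases List.cons_lt_cons_iff.mp h₂ with hxc | ⟨_, hvw⟩
    · exact absurd hxc (lt_irrefl _)
    · exact ⟨rfl, huv, hvw⟩

lemma sfx_eq_cons {β : Type*} (T : ℕ → β) {n p : ℕ} (hp : p ≤ n) :
    sfx T n p = T p :: sfx T n (p + 1) := by
  unfold sfx
  rw [show n + 1 - p = n + 1 - (p + 1) + 1 by omega, List.range_succ_eq_map, List.map_cons,
    List.map_map]
  refine congrArg₂ _ (by simp) (List.map_congr_left fun d _ => ?_)
  simp only [Function.comp_apply]
  congr 1
  omega

lemma sfx_SA_sub_one {β : Type*} {T : ℕ → β} {dollar : β} {SA : ℕ → ℕ} {n i : ℕ}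
    (h₁ : 1 < SA i) (h₂ : SA i ≤ n) :
    sfx T n (SA i - 1) = bwt T SA dollar i :: sfx T n (SA i) := by
  rw [sfx_eq_cons T (by omega), Nat.sub_add_cancel h₁.le, bwt, if_neg h₁.ne']

lemma exists_bwt_eq_of_lt_of_lt {n : ℕ} {T : ℕ → α} {dollar : α} {SA : ℕ → ℕ}
    (hTn : T n = dollar) {c : α} (hc : c ≠ dollar)
    (hSAsurj : ∀ p, 1 ≤ p → p ≤ n → ∃ i, 1 ≤ i ∧ i ≤ n ∧ SA i = p)
    (hsorted : StrictMonoOn (fun i => sfx T n (SA i)) (Set.Icc 1 n))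
    {k p q : ℕ} (hk : k ∈ Set.Icc 1 n) (hp : p ∈ Set.Icc 1 n) (hq : q ∈ Set.Icc 1 n)
    (hkq : c :: sfx T n (SA k) < sfx T n q) (hqp : sfx T n q < c :: sfx T n (SA p)) :
    ∃ m, k < m ∧ m < p ∧ bwt T SA dollar m = c := by
  obtain ⟨hq1, hqn⟩ := hq
  rw [sfx_eq_cons T hqn] at hkq hqp
  obtain ⟨hTq, hkq', hqp'⟩ :=
    List.eq_and_lt_and_lt_of_cons_lt_cons_of_cons_lt_cons hkq hqp
  have hq_ne : q ≠ n := by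
    rintro rfl
    exact hc (hTq ▸ hTn)
  obtain ⟨m, hm1, hmn, hm⟩ := hSAsurj (q + 1) (by omega) (by omega)
  rw [← hm] at hkq' hqp'
  refine ⟨m, (hsorted.lt_iff_lt hk ⟨hm1, hmn⟩).mp hkq',
    (hsorted.lt_iff_lt ⟨hm1, hmn⟩ hp).mp hqp', ?_⟩
  rw [bwt, hm, if_neg (by omega), Nat.add_sub_cancel, hTq]

theorem statement1_general
    (n : ℕ) (T : ℕ → α) (dollar : α) (SA : ℕ → ℕ)
    -- `T[1..n]` is a string of length `n ≥ 1` ending with `$`,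
    -- which is smaller than every other character and occurs only at position `n`
    (hTn : T n = dollar)
    -- `SA` is a permutation of `{1,...,n}` sorting the suffixes lexicographically
    (hSAran : ∀ i, 1 ≤ i → i ≤ n → 1 ≤ SA i ∧ SA i ≤ n)
    (hSAsurj : ∀ p, 1 ≤ p → p ≤ n → ∃ i, 1 ≤ i ∧ i ≤ n ∧ SA i = p)
    (hSAmono : ∀ i j, 1 ≤ i → i < j → j ≤ n → sfx T n (SA i) < sfx T n (SA j))
    (k : ℕ) (hk1 : 1 ≤ k)
    (c : α) (hc : c ≠ dollar)
    (p : ℕ) (hp1 : k < p) (hp2 : p ≤ n) (hpc : bwt T SA dollar p = c)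
    (hpmin : ∀ q, k < q → q ≤ n → bwt T SA dollar q = c → p ≤ q) :
    1 < SA p ∧
    c :: sfx T n (SA k) < sfx T n (SA p - 1) ∧
    ∀ q, 1 ≤ q → q ≤ n → c :: sfx T n (SA k) < sfx T n q →
      sfx T n (SA p - 1) ≤ sfx T n q := by
  have hsorted : StrictMonoOn (fun i => sfx T n (SA i)) (Set.Icc 1 n) :=
    fun i hi j hj hij => hSAmono i j hi.1 hij hj.2
  have hSAp := hSAran p (by omega) hp2
  have hSAp1 : 1 < SA p := by
    refine lt_of_le_of_ne hSAp.1 fun h => hc ?_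
    rw [← hpc, bwt, if_pos h.symm]
  have hpred : sfx T n (SA p - 1) = c :: sfx T n (SA p) := by
    rw [sfx_SA_sub_one hSAp1 hSAp.2, hpc]
  refine ⟨hSAp1, hpred ▸ List.Lex.cons (hSAmono k p hk1 hp1 hp2), fun q hq1 hq2 hkq => ?_⟩
  by_contra! hqp
  rw [hpred] at hqp
  obtain ⟨m, hkm, hmp, hm⟩ := exists_bwt_eq_of_lt_of_lt hTn hc hSAsurj hsorted
    ⟨hk1, by omega⟩ ⟨by omega, hp2⟩ ⟨hq1, hq2⟩ hkq hqp
  exact absurd (hpmin m hkm (by omega) hm) (not_le.mpr hmp)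

/-- If `p > k` is the smallest position with `BWT[p] = c ≠ $`, then
`SA[p] > 1` and `T[SA[p]-1..n]` is the lexicographically smallest suffix of `T`
strictly greater than `c · T[SA[k]..n]`. -/
theorem statement1
    (n : ℕ) (T : ℕ → α) (dollar : α) (SA : ℕ → ℕ)
    -- `T[1..n]` is a string of length `n ≥ 1` ending with `$`,
    -- which is smaller than every other character and occurs only at position `n`
    (hn : 1 ≤ n) (hTn : T n = dollar)
    (hdollar : ∀ p, 1 ≤ p → p < n → dollar < T p)
    -- `SA` is a permutation of `{1,...,n}` sorting the suffixes lexicographically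
    (hSAran : ∀ i, 1 ≤ i → i ≤ n → 1 ≤ SA i ∧ SA i ≤ n)
    (hSAsurj : ∀ p, 1 ≤ p → p ≤ n → ∃ i, 1 ≤ i ∧ i ≤ n ∧ SA i = p)
    (hSAmono : ∀ i j, 1 ≤ i → i < j → j ≤ n → sfx T n (SA i) < sfx T n (SA j))
    (k : ℕ) (hk1 : 1 ≤ k) (hk2 : k ≤ n)
    (c : α) (hc : c ≠ dollar)
    (p : ℕ) (hp1 : k < p) (hp2 : p ≤ n) (hpc : bwt T SA dollar p = c)
    (hpmin : ∀ q, k < q → q ≤ n → bwt T SA dollar q = c → p ≤ q) :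
    1 < SA p ∧
    c :: sfx T n (SA k) < sfx T n (SA p - 1) ∧
    ∀ q, 1 ≤ q → q ≤ n → c :: sfx T n (SA k) < sfx T n q →
      sfx T n (SA p - 1) ≤ sfx T n q :=
  statement1_general n T dollar SA hTn hSAran hSAsurj hSAmono k hk1 c hc p hp1 hp2 hpc hpmin
end

section
/- Let A be a finite nonempty set of strings over a linearly ordered alphabet and let W be any string. Then there exists V ∈ A maximizing lcp(W, ·) over A such that V is either the lexicographically largest element of {U ∈ A : U ≤ W} or the lexicographically smallest element of {U ∈ A : W < U}. That is, a maximizer of the longest-common-prefix length with W can always be found among the (at most two) elements of A lexicographically adjacent to W. -/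
/-! Lexicographic order keeps common prefixes contiguous: if `U ≤ V ≤ W` then `V` shares with
each of `U` and `W` at least their common prefix. Hence if a maximizer `M` of `lcp W ·` lies at
or below `W`, the largest element of `A` below `W` lies between `M` and `W` and is a maximizer
too; symmetrically above `W`. -/

variable {α : Type*} [LinearOrder α]

/-- Length of the longest common prefix of two lists. -/
def lcp [DecidableEq β] : List β → List β → ℕ
  | a :: u, b :: v => if a = b then lcp u v + 1 else 0
  | _, _ => 0

theorem lcp_comm {β : Type*} [DecidableEq β] : ∀ u v : List β, lcp u v = lcp v u
  | a :: u, b :: v => by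
    by_cases hab : a = b
    · simp only [lcp, hab, if_true, lcp_comm u v]
    · simp only [lcp, hab, Ne.symm hab, if_false]
  | [], [] | [], _ :: _ | _ :: _, [] => rfl

theorem List.cons_le_cons_iff_of_linearOrder {a b : α} {u v : List α} :
    a :: u ≤ b :: v ↔ a < b ∨ a = b ∧ u ≤ v := by
  simp only [le_iff_lt_or_eq, List.cons_lt_cons_iff, List.cons_eq_cons]
  tauto

theorem List.head_le_of_cons_le_cons {a b : α} {u v : List α} (h : a :: u ≤ b :: v) :
    a ≤ b :=
  (List.cons_le_cons_iff_of_linearOrder.mp h).elim le_of_lt (·.1.le)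

theorem lcp_le_min_of_le_of_le {u v w : List α} (huv : u ≤ v) (hvw : v ≤ w) :
    lcp u w ≤ min (lcp u v) (lcp v w) := by
  induction u generalizing v w with
  | nil => exact Nat.zero_le _
  | cons a u ih =>
    rcases v with _ | ⟨b, v⟩
    · exact absurd huv (not_le.mpr (List.nil_lt_cons a u))
    rcases w with _ | ⟨c, w⟩
    · exact absurd hvw (not_le.mpr (List.nil_lt_cons b v))
    by_cases hac : a = c
    · subst c
      obtain rfl : a = b := le_antisymm (List.head_le_of_cons_le_cons huv)
        (List.head_le_of_cons_le_cons hvw)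
      have tail_le {l l' : List α} (h : a :: l ≤ a :: l') : l ≤ l' :=
        ((List.cons_le_cons_iff_of_linearOrder.mp h).resolve_left (lt_irrefl a)).2
      simpa only [lcp, if_true, Nat.succ_min_succ] using
        Nat.succ_le_succ (ih (tail_le huv) (tail_le hvw))
    · simp only [lcp, hac, if_false, Nat.zero_le]

/-- For a finite nonempty set `A` of strings and any string `W`,
some `V ∈ A` maximizing the LCP length with `W` is either the lexicographically
largest element of `{U ∈ A : U ≤ W}` or the lexicographically smallest element of
`{U ∈ A : W < U}`. -/
theorem statement9 (A : Finset (List α)) (hA : A.Nonempty) (W : List α) :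
    ∃ V ∈ A, (∀ U ∈ A, lcp W U ≤ lcp W V) ∧
      ((V ≤ W ∧ ∀ U ∈ A, U ≤ W → U ≤ V) ∨ (W < V ∧ ∀ U ∈ A, W < U → V ≤ U)) := by
  obtain ⟨M, hMA, hM⟩ := A.exists_max_image (lcp W) hA
  rcases le_or_gt M W with hMW | hWM
  · have hB : (A.filter (· ≤ W)).Nonempty := ⟨M, Finset.mem_filter.mpr ⟨hMA, hMW⟩⟩
    obtain ⟨hVA, hVW⟩ := Finset.mem_filter.mp ((A.filter (· ≤ W)).max'_mem hB)
    have hle : ∀ U ∈ A, U ≤ W → U ≤ (A.filter (· ≤ W)).max' hB := fun U hU hUW =>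
      (A.filter (· ≤ W)).le_max' U (Finset.mem_filter.mpr ⟨hU, hUW⟩)
    refine ⟨_, hVA, fun U hU => (hM U hU).trans ?_, Or.inl ⟨hVW, hle⟩⟩
    rw [lcp_comm W M, lcp_comm W]
    exact (lcp_le_min_of_le_of_le (hle M hMA hMW) hVW).trans (min_le_right _ _)
  · have hC : (A.filter (W < ·)).Nonempty := ⟨M, Finset.mem_filter.mpr ⟨hMA, hWM⟩⟩
    obtain ⟨hVA, hWV⟩ := Finset.mem_filter.mp ((A.filter (W < ·)).min'_mem hC)
    have hge : ∀ U ∈ A, W < U → (A.filter (W < ·)).min' hC ≤ U := fun U hU hWU =>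
      (A.filter (W < ·)).min'_le U (Finset.mem_filter.mpr ⟨hU, hWU⟩)
    refine ⟨_, hVA, fun U hU => (hM U hU).trans ?_, Or.inr ⟨hWV, hge⟩⟩
    exact (lcp_le_min_of_le_of_le hWV.le (hge M hMA hWM)).trans (min_le_left _ _)
end
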